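/- Let u and v be binary words of the same length n, each containing at least one 0 and at least one 1. If n_{0,u} ≠ n_{0,v}, or n_{1,u} ≠ n_{1,v}, or l_u ≠ l_v, then there exists a distinguishing subword for u and v of length at most 3n/4 + 4. -/

import Mathlib

open List

/-- Two binary words are conjugate (cyclic rotations of each other). -/
def ConjWords (x y : List Bool) : Prop := ∃ s t : List Bool, x = s ++ t ∧ y = t ++ s

/-- `s` is a cyclic (scattered) subword of `w`: some conjugate of `s` is a
subsequence of some conjugate of `w`. -/
def CyclicSubword (s w : List Bool) : Prop :=
  ∃ s' w' : List Bool, ConjWords s s' ∧ ConjWords w w' ∧ s'.Sublist w'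

/-- `w` is a distinguishing subword for `u` and `v`: it is a cyclic subword of
exactly one of them. -/
def Distinguishing (w u v : List Bool) : Prop :=
  Xor' (CyclicSubword w u) (CyclicSubword w v)

/-- Cyclic access to the letters of a word. -/
def cget (w : List Bool) (i : ℕ) : Bool := w.getD (i % w.length) false

/-- The number of blocks of 0's of the cyclic word `w` (equivalently, of blocks of 1's,
for a word containing both letters): positions carrying a `0` whose cyclic
predecessor carries a `1`. -/
noncomputable def lCount (w : List Bool) : ℕ :=
  {i | i < w.length ∧ cget w i = false ∧ cget w (i + w.length - 1) = true}.ncard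

/-- The maximal length of a cyclic run of 0's in `w`. -/
noncomputable def xMax (w : List Bool) : ℕ :=
  sSup {k | ∃ i, ∀ j < k, cget w (i + j) = false}

/-- There is a maximal run (block) of 0's of length exactly `k` starting at position `i`. -/
def IsZeroBlockAt (w : List Bool) (i k : ℕ) : Prop :=
  cget w (i + w.length - 1) = true ∧ (∀ j < k, cget w (i + j) = false) ∧ cget w (i + k) = true

/-- The maximal length of a block of 0's of length smaller than `xMax w` (0 if none). -/
noncomputable def yMax (w : List Bool) : ℕ :=
  sSup {k | k < xMax w ∧ ∃ i, IsZeroBlockAt w i k}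

/-- The number of big blocks (blocks of 0's of maximal length) of `w`. -/
noncomputable def aCount (w : List Bool) : ℕ :=
  {i | i < w.length ∧ IsZeroBlockAt w i (xMax w)}.ncard

/-- `r`-th power of a word. -/
def listPow (z : List Bool) (r : ℕ) : List Bool := (List.replicate r z).flatten

/-- The word `0^t 1^m`. -/
def blk (t m : ℕ) : List Bool := List.replicate t false ++ List.replicate m true

/-- Special words (of the first, second or third type). -/
def Special (w : List Bool) : Prop :=
  2 ≤ lCount w ∧ ∃ t m : ℕ, 0 < t ∧ 0 < m ∧
    (ConjWords w (listPow (blk t m) (lCount w)) ∨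
     ConjWords w (listPow (blk t m) (lCount w - 1) ++ blk t (2 * m)) ∨
     ∃ i : ℕ, i ≤ lCount w - 2 ∧
       ConjWords w (listPow (blk t m) i ++ blk t (2 * m) ++
         listPow (blk t m) (lCount w - i - 2) ++ blk t (2 * m)))

/-- A cyclic word is periodic if it is conjugate to a proper power. -/
def PeriodicWord (w : List Bool) : Prop :=
  ∃ z : List Bool, ∃ r : ℕ, 2 ≤ r ∧ ConjWords w (listPow z r)

/-- Position `i` lies in a big block of 0's of `w`. -/
def InBigBlock (w : List Bool) (i : ℕ) : Prop :=
  ∃ s < xMax w, ∀ j < xMax w, cget w (i + w.length - s + j) = false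

open Classical in
/-- `w_long`: the cyclic subword of `w` consisting of all 1's together with the
0's lying in big blocks. -/
noncomputable def wLong (w : List Bool) : List Bool :=
  (List.range w.length).filterMap (fun i =>
    if cget w i = true ∨ InBigBlock w i then some (cget w i) else none)

/-- Access to letters of a word indexed by `ZMod`. -/
def zget (w : List Bool) (i : ZMod w.length) : Bool := w.getD i.val false

/-- `f` is an occurrence of `s` in the cyclic word `w`. -/
def IsOccurrence (s w : List Bool) (f : ZMod s.length → ZMod w.length) : Prop :=
  (∀ i, zget w (f i) = zget s i) ∧
  ∃ j : ZMod s.length, ∃ p : ZMod w.length, ∃ t : Fin s.length → ℕ,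
    StrictMono t ∧ (∀ i, t i ≤ w.length - 1) ∧
    ∀ i : Fin s.length, f ((i.val : ZMod s.length) + j) = p + (t i : ZMod w.length)

/-- `s` is a unioccurrent subword of `w`: it has exactly one occurrence in `w`. -/
def Unioccurrent (s w : List Bool) : Prop := ∃! f, IsOccurrence s w f

def tstep (a b : Bool) : ℕ := cond (a && !b) 1 0

def tf : List Bool → ℕ
  | a :: b :: r => tstep a b + tf (b :: r)
  | _ => 0

def cyc (w : List Bool) : ℕ := tf (w ++ w.take 1)

lemma tf_nil : tf [] = 0 := rfl
lemma tf_single (a : Bool) : tf [a] = 0 := rfl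
lemma tf_cons (a b : Bool) (r : List Bool) : tf (a :: b :: r) = tstep a b + tf (b :: r) := rfl

lemma tf_split : ∀ (x : List Bool) (a : Bool) (y : List Bool),
    tf (x ++ a :: y) = tf (x ++ [a]) + tf (a :: y) := by
  intro x
  induction x with
  | nil => intro a y; simp [tf]
  | cons b x' ih =>
    intro a y
    cases x' with
    | nil => simp [tf_cons, tf_single]
    | cons c x'' =>
      have h1 : (b :: c :: x'') ++ a :: y = b :: c :: (x'' ++ a :: y) := by simp
      have h2 : (b :: c :: x'') ++ [a] = b :: c :: (x'' ++ [a]) := by simp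
      rw [h1, h2, tf_cons, tf_cons]
      have := ih a y
      simp at this
      simp [this]
      omega

lemma tf_snoc (x : List Bool) (c a : Bool) :
    tf ((x ++ [c]) ++ [a]) = tf (x ++ [c]) + tstep c a := by
  have := tf_split x c [a]
  simp at this ⊢
  rw [this, tf_cons, tf_single]
  omega

lemma cyc_nil : cyc [] = 0 := rfl

lemma cyc_conj (s t : List Bool) : cyc (s ++ t) = cyc (t ++ s) := by
  cases s with
  | nil => simp
  | cons a s₂ =>
    cases t with
    | nil => simp
    | cons b t₂ =>
      have key : ∀ (p q : List Bool) (x y : Bool),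
          cyc ((x :: p) ++ (y :: q)) = tf ((x :: p) ++ [y]) + tf ((y :: q) ++ [x]) := by
        intro p q x y
        show tf (((x :: p) ++ (y :: q)) ++ [x]) = _
        have h1 : ((x :: p) ++ (y :: q)) ++ [x] = (x :: p) ++ (y :: (q ++ [x])) := by simp
        rw [h1, tf_split]
        simp
      rw [key, key]
      omega

lemma tstep_cases : ∀ a b c : Bool,
    tstep c b ≤ tstep a b + tstep c a ∧ tstep a b + tstep c a ≤ tstep c b + 1 := by decide

lemma cyc_cons_bounds (a : Bool) (r : List Bool) :
    cyc r ≤ cyc (a :: r) ∧ cyc (a :: r) ≤ cyc r + 1 := by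
  cases r with
  | nil =>
    have : cyc [a] = tstep a a := by simp [cyc, tf_cons, tf_single]
    rw [this]
    cases a <;> simp [cyc_nil, tstep]
  | cons b r₂ =>
    rcases List.eq_nil_or_concat (b :: r₂) with h | ⟨x, c, hx⟩
    all_goals try simp only [List.concat_eq_append] at hx
    · simp at h
    · have h1 : cyc (a :: b :: r₂) = tstep a b + (tf (b :: r₂) + tstep c a) := by
        show tf ((a :: b :: r₂) ++ [a]) = _
        have : (a :: b :: r₂) ++ [a] = a :: b :: (r₂ ++ [a]) := by simp
        rw [this, tf_cons]
        have : b :: (r₂ ++ [a]) = (b :: r₂) ++ [a] := by simp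
        rw [this, hx, tf_snoc, ← hx]
      have h2 : cyc (b :: r₂) = tf (b :: r₂) + tstep c b := by
        show tf ((b :: r₂) ++ [b]) = _
        rw [hx, tf_snoc, ← hx]
      rw [h1, h2]
      have := tstep_cases a b c
      omega

lemma sublist_step {s w : List Bool} (h : s <+ w) (hl : s.length < w.length) :
    ∃ x a y, w = x ++ a :: y ∧ s <+ x ++ y := by
  induction h with
  | slnil => simp at hl
  | @cons l₁ l₂ a h ih => exact ⟨[], a, l₂, rfl, by simpa using h⟩
  | @cons_cons l₁ l₂ a h ih =>
    simp at hl
    obtain ⟨x, b, y, hw, hs⟩ := ih hl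
    exact ⟨a :: x, b, y, by simp [hw], by simpa using hs.cons₂ a⟩

lemma cyc_sublist : ∀ (m : ℕ) (w s : List Bool), w.length ≤ m → s <+ w →
    cyc s ≤ cyc w ∧ cyc w ≤ cyc s + (w.length - s.length) := by
  intro m
  induction m with
  | zero =>
    intro w s hm hs
    have : w = [] := by cases w <;> simp_all
    subst this
    have : s = [] := List.sublist_nil.mp hs
    simp [this]
  | succ m ih =>
    intro w s hm hs
    rcases eq_or_lt_of_le hs.length_le with heq | hlt
    · have : s = w := hs.eq_of_length heq
      subst this; omega
    · obtain ⟨x, a, y, hw, hs'⟩ := sublist_step hs hlt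
      have hconj1 : cyc w = cyc (a :: (y ++ x)) := by
        rw [hw]
        have : x ++ a :: y = x ++ ((a :: y)) := by simp
        rw [this, cyc_conj]
        simp
      have hconj2 : cyc (x ++ y) = cyc (y ++ x) := cyc_conj x y
      have hlen : (x ++ y).length ≤ m := by
        have : w.length = x.length + y.length + 1 := by simp [hw]; omega
        simp at this ⊢
        omega
      have hb := cyc_cons_bounds a (y ++ x)
      have := ih (x ++ y) s hlen hs'
      have hwl : w.length = (x ++ y).length + 1 := by simp [hw]; omega
      have hsl : s.length ≤ (x++y).length := hs'.length_le
      omega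


-- sum formula for tf
lemma tf_eq_sum : ∀ w : List Bool,
    tf w = ∑ i ∈ Finset.range (w.length - 1), tstep (w.getD i false) (w.getD (i+1) false) := by
  intro w
  induction w with
  | nil => simp [tf]
  | cons a w' ih =>
    cases w' with
    | nil => simp [tf]
    | cons b r =>
      show tstep a b + tf (b :: r) = _
      have hlen : (a :: b :: r).length - 1 = ((b :: r).length - 1) + 1 := by simp
      rw [hlen, Finset.sum_range_succ']
      have h0 : (a :: b :: r).getD 0 false = a := rfl
      have h1 : (a :: b :: r).getD 1 false = b := rfl
      have hsh : ∀ i, (a :: b :: r).getD (i+1) false = (b :: r).getD i false := by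
        intro i; rfl
      rw [ih]
      have hb0 : (b :: r).getD 0 false = b := rfl
      simp only [hsh, h0, hb0]
      omega

lemma tf_splitB : ∀ (x : List Bool) (a : Bool) (y : List Bool),
    tf (x ++ a :: y) = tf (x ++ [a]) + tf (a :: y) := by
  intro x
  induction x with
  | nil => intro a y; simp [tf]
  | cons b x' ih =>
    intro a y
    cases x' with
    | nil => simp [tf]
    | cons c x'' =>
      have h1 : (b :: c :: x'') ++ a :: y = b :: c :: (x'' ++ a :: y) := by simp
      have h2 : (b :: c :: x'') ++ [a] = b :: c :: (x'' ++ [a]) := by simp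
      rw [h1, h2]
      show tstep b c + tf (c :: (x'' ++ a :: y)) = tstep b c + tf (c :: (x'' ++ [a])) + tf (a :: y)
      have := ih a y
      simp only [List.cons_append] at this
      omega

lemma tf_snocB (x : List Bool) (c a : Bool) :
    tf ((x ++ [c]) ++ [a]) = tf (x ++ [c]) + tstep c a := by
  have := tf_splitB x c [a]
  have e : x ++ [c] ++ [a] = x ++ c :: [a] := by simp
  rw [e, this]
  show _ = tf (x ++ [c]) + (tstep c a + tf [a])
  simp [tf]

-- cyc in terms of tf and endpoints, via getD
lemma cyc_eq_tf_add (w : List Bool) (hw : w ≠ []) :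
    cyc w = tf w + tstep (w.getD (w.length - 1) false) (w.getD 0 false) := by
  rcases List.eq_nil_or_concat w with h | ⟨x, c, hx⟩
  · exact absurd h hw
  · simp only [List.concat_eq_append] at hx
    subst hx
    have hhead : (x ++ [c]).take 1 = [(x ++ [c]).getD 0 false] := by
      cases x with
      | nil => rfl
      | cons a x' => rfl
    have hlast : (x ++ [c]).getD ((x ++ [c]).length - 1) false = c := by
      have : (x ++ [c]).length - 1 = x.length := by simp
      rw [this]
      simp [List.getD, List.getElem?_append_right (le_refl x.length)]
    rw [cyc, hhead, hlast, tf_snocB]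

lemma lCount_eq_cyc (w : List Bool) : lCount w = cyc w := by
  cases w with
  | nil =>
    have : {i | i < ([] : List Bool).length ∧ cget [] i = false ∧ cget [] (i + ([] : List Bool).length - 1) = true} = ∅ := by
      ext i; simp
    simp [lCount, this, cyc, tf]
  | cons a w' =>
    set w := a :: w' with hw
    have hwne : w ≠ [] := by simp [hw]
    have hn : 0 < w.length := by simp [hw]
    set n := w.length with hnn
    have hset : {i | i < n ∧ cget w i = false ∧ cget w (i + n - 1) = true}
        = ↑((Finset.range n).filter (fun i => cget w i = false ∧ cget w (i + n - 1) = true)) := by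
      ext i
      simp only [Finset.coe_filter, Finset.mem_range, Set.mem_setOf_eq]
    rw [lCount, ← hnn, hset, Set.ncard_coe_finset]
    rw [Finset.card_filter]
    have hcget : ∀ i, i < n → cget w i = w.getD i false := by
      intro i hi
      simp only [cget, ← hnn]
      rw [Nat.mod_eq_of_lt hi]
    have hprev : ∀ i, 0 < i → i < n → cget w (i + n - 1) = w.getD (i-1) false := by
      intro i h0 hi
      simp only [cget, ← hnn]
      have : (i + n - 1) % n = i - 1 := by
        have h1 : i + n - 1 = (i - 1) + n := by omega
        rw [h1, Nat.add_mod_right]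
        exact Nat.mod_eq_of_lt (by omega)
      rw [this]
    have hprev0 : cget w (0 + n - 1) = w.getD (n-1) false := by
      simp only [cget, ← hnn]
      have : (0 + n - 1) % n = n - 1 := by
        rw [Nat.zero_add]
        exact Nat.mod_eq_of_lt (by omega)
      rw [this]
    -- turn the sum over range n into boundary + shifted sum
    obtain ⟨m, hm⟩ : ∃ m, n = m + 1 := ⟨n - 1, by omega⟩
    rw [hm, Finset.sum_range_succ']
    have hbody : ∀ i, i < m →
        (if cget w (i+1) = false ∧ cget w ((i+1) + n - 1) = true then 1 else 0)
          = tstep (w.getD i false) (w.getD (i+1) false) := by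
      intro i hi
      rw [hcget (i+1) (by omega), hprev (i+1) (by omega) (by omega)]
      simp only [Nat.add_sub_cancel]
      rcases hb : w.getD i false <;> rcases hc : w.getD (i+1) false <;> simp [tstep]
    have hbdy : (if cget w 0 = false ∧ cget w (0 + n - 1) = true then 1 else 0)
        = tstep (w.getD (n-1) false) (w.getD 0 false) := by
      rw [hcget 0 hn, hprev0]
      rcases hb : w.getD (n-1) false <;> rcases hc : w.getD 0 false <;> simp [tstep]
    simp only [← hm]
    rw [Finset.sum_congr rfl (fun i hi => hbody i (Finset.mem_range.mp hi)), hbdy]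
    have h1 : w.length - 1 = m := by omega
    have h2 : n - 1 = m := by omega
    rw [cyc_eq_tf_add w hwne, tf_eq_sum, h1]


def bform (ps : List (ℕ × ℕ)) : List Bool := (ps.map fun p => blk p.1 p.2).flatten

lemma bform_nil : bform [] = [] := rfl
lemma bform_cons (p : ℕ × ℕ) (r : List (ℕ × ℕ)) :
    bform (p :: r) = blk p.1 p.2 ++ bform r := by simp [bform]
lemma bform_append (x y : List (ℕ × ℕ)) : bform (x ++ y) = bform x ++ bform y := by
  simp [bform]

lemma blk_length (z o : ℕ) : (blk z o).length = z + o := by simp [blk]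

lemma bform_length (ps : List (ℕ × ℕ)) :
    (bform ps).length = (ps.map fun p => p.1 + p.2).sum := by
  induction ps with
  | nil => rfl
  | cons p r ih => simp [bform_cons, blk_length, ih]

lemma blk_count_false (z o : ℕ) : (blk z o).count false = z := by
  simp [blk, List.count_append, List.count_replicate]

lemma blk_count_true (z o : ℕ) : (blk z o).count true = o := by
  simp [blk, List.count_append, List.count_replicate]

lemma bform_count_false (ps : List (ℕ × ℕ)) :
    (bform ps).count false = (ps.map fun p => p.1).sum := by
  induction ps with
  | nil => rfl
  | cons p r ih => simp [bform_cons, List.count_append, blk_count_false, ih]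

lemma bform_count_true (ps : List (ℕ × ℕ)) :
    (bform ps).count true = (ps.map fun p => p.2).sum := by
  induction ps with
  | nil => rfl
  | cons p r ih => simp [bform_cons, List.count_append, blk_count_true, ih]

-- stepping lemmas
lemma tf_cons_replicate_false : ∀ (m : ℕ), 0 < m → ∀ (b : Bool) (X : List Bool),
    tf (b :: (List.replicate m false ++ X)) = tstep b false + tf (false :: X) := by
  intro m
  induction m with
  | zero => omega
  | succ m ih =>
    intro _ b X
    rcases Nat.eq_zero_or_pos m with hm | hm
    · subst hm; rw [show List.replicate 1 false ++ X = false :: X from rfl, tf_cons]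
    · have : List.replicate (m+1) false ++ X = false :: (List.replicate m false ++ X) := by
        simp [List.replicate_succ]
      rw [this, tf_cons, ih hm false X]
      have : tstep false false = 0 := rfl
      omega

lemma tf_cons_replicate_true : ∀ (m : ℕ), 0 < m → ∀ (b : Bool) (X : List Bool),
    tf (b :: (List.replicate m true ++ X)) = tstep b true + tf (true :: X) := by
  intro m
  induction m with
  | zero => omega
  | succ m ih =>
    intro _ b X
    rcases Nat.eq_zero_or_pos m with hm | hm
    · subst hm; rw [show List.replicate 1 true ++ X = true :: X from rfl, tf_cons]
    · have : List.replicate (m+1) true ++ X = true :: (List.replicate m true ++ X) := by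
        simp [List.replicate_succ]
      rw [this, tf_cons, ih hm true X]
      have : tstep true true = 0 := rfl
      omega

lemma tf_true_bform : ∀ ps : List (ℕ × ℕ), (∀ p ∈ ps, 1 ≤ p.2) →
    tf (true :: bform ps) = ps.countP (fun p => decide (0 < p.1)) := by
  intro ps
  induction ps with
  | nil => simp [tf, bform_nil]
  | cons p r ih =>
    intro hmem
    have ho : 1 ≤ p.2 := hmem p (by simp)
    have hr : ∀ q ∈ r, 1 ≤ q.2 := fun q hq => hmem q (by simp [hq])
    rw [bform_cons]
    rcases Nat.eq_zero_or_pos p.1 with hz | hz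
    · have : blk p.1 p.2 = List.replicate p.2 true := by simp [blk, hz]
      rw [this]
      have : List.replicate p.2 true ++ bform r = List.replicate p.2 true ++ bform r := rfl
      rw [show true :: (List.replicate p.2 true ++ bform r) = true :: (List.replicate p.2 true ++ bform r) from rfl]
      rw [tf_cons_replicate_true p.2 ho true (bform r), ih hr]
      have : tstep true true = 0 := rfl
      rw [List.countP_cons]
      simp [hz, this]
    · have : blk p.1 p.2 = List.replicate p.1 false ++ (List.replicate p.2 true ++ bform r) → True := fun _ => trivial
      have hb : true :: (blk p.1 p.2 ++ bform r)
          = true :: (List.replicate p.1 false ++ (List.replicate p.2 true ++ bform r)) := by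
        simp [blk]
      rw [hb, tf_cons_replicate_false p.1 hz true _,
          tf_cons_replicate_true p.2 ho false (bform r), ih hr]
      have h1 : tstep true false = 1 := rfl
      have h2 : tstep false true = 0 := rfl
      rw [List.countP_cons]
      simp [hz, h1, h2]
      omega

lemma bform_ends_true : ∀ ps : List (ℕ × ℕ), ps ≠ [] → (∀ p ∈ ps, 1 ≤ p.2) →
    ∃ x, bform ps = x ++ [true] := by
  intro ps
  induction ps using List.reverseRecOn with
  | nil => intro h; exact absurd rfl h
  | append_singleton r p ih =>
    intro _ hmem
    have ho : 1 ≤ p.2 := hmem p (by simp)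
    obtain ⟨o', ho'⟩ : ∃ o', p.2 = o' + 1 := ⟨p.2 - 1, by omega⟩
    refine ⟨bform r ++ List.replicate p.1 false ++ List.replicate o' true, ?_⟩
    rw [bform_append, bform_cons, bform_nil]
    simp [blk, ho', List.replicate_succ' (n := o') (a := true)]

lemma cyc_bform (ps : List (ℕ × ℕ)) (hne : ps ≠ []) (ho : ∀ p ∈ ps, 1 ≤ p.2) :
    cyc (bform ps) = ps.countP (fun p => decide (0 < p.1)) := by
  obtain ⟨x, hx⟩ := bform_ends_true ps hne ho
  have h1 : cyc (bform ps) = cyc (true :: x) := by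
    rw [hx, cyc_conj x [true]]
    rfl
  have h2 : cyc (true :: x) = tf (true :: (x ++ [true])) := by
    show tf ((true :: x) ++ [true]) = _
    simp
  rw [h1, h2, ← hx, tf_true_bform ps ho]


lemma conjWords_iff_isRotated (x y : List Bool) : ConjWords x y ↔ x ~r y := by
  constructor
  · rintro ⟨s, t, rfl, rfl⟩
    exact List.isRotated_append
  · rintro ⟨k, rfl⟩
    exact ⟨_, _, (List.take_append_drop (k % x.length) x).symm,
      List.rotate_eq_drop_append_take_mod⟩

lemma conjWords_refl (x : List Bool) : ConjWords x x := ⟨x, [], by simp, by simp⟩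
lemma conjWords_symm {x y : List Bool} (h : ConjWords x y) : ConjWords y x := by
  rw [conjWords_iff_isRotated] at *; exact h.symm
lemma conjWords_trans {x y z : List Bool} (h1 : ConjWords x y) (h2 : ConjWords y z) :
    ConjWords x z := by
  rw [conjWords_iff_isRotated] at *; exact h1.trans h2

lemma conjWords_length {x y : List Bool} (h : ConjWords x y) : x.length = y.length := by
  rcases h with ⟨s, t, rfl, rfl⟩; simp; omega

lemma conjWords_count {x y : List Bool} (h : ConjWords x y) (b : Bool) :
    x.count b = y.count b := by
  rcases h with ⟨s, t, rfl, rfl⟩; simp [List.count_append]; omega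

lemma conjWords_mem {x y : List Bool} (h : ConjWords x y) (b : Bool) :
    b ∈ x ↔ b ∈ y := by
  rcases h with ⟨s, t, rfl, rfl⟩; simp [List.mem_append]; tauto

-- decomposition
lemma decomp_aux : ∀ (m : ℕ) (w : List Bool), w.length ≤ m → w.head? = some false →
    w.getLast? = some true →
    ∃ ps : List (ℕ × ℕ), ps ≠ [] ∧ (∀ p ∈ ps, 1 ≤ p.1 ∧ 1 ≤ p.2) ∧ w = bform ps := by
  intro m
  induction m with
  | zero =>
    intro w hm hh _
    cases w with
    | nil => simp at hh
    | cons a r => simp at hm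
  | succ m ih =>
    intro w hm hh hl
    have hwne : w ≠ [] := by intro h; rw [h] at hh; simp at hh
    set t1 := w.takeWhile (· == false) with ht1
    set d := w.dropWhile (· == false) with hd
    have hsplit : t1 ++ d = w := List.takeWhile_append_dropWhile
    have ht1rep : t1 = List.replicate t1.length false := by
      apply List.eq_replicate_of_mem
      intro b hb
      have := List.mem_takeWhile_imp hb
      simpa using this
    have ht1pos : 0 < t1.length := by
      cases w with
      | nil => simp at hwne
      | cons a w₂ =>
        have ha : a = false := by simpa using hh
        subst ha
        rw [ht1, List.takeWhile_cons_of_pos (by simp)]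
        simp
    have hdne : d ≠ [] := by
      intro h
      rw [h, List.append_nil] at hsplit
      rw [← hsplit, ht1rep, List.getLast?_replicate] at hl
      rw [if_neg (by omega)] at hl
      simp at hl
    have hdhead : d.head hdne = true := by
      have h2 : (d.head hdne == false) = false := List.head_dropWhile_not (· == false) hdne
      cases hx : d.head hdne
      · rw [hx] at h2; simp at h2
      · rfl
    have hdeq : d = true :: d.tail := by
      conv_lhs => rw [← List.cons_head_tail hdne]
      rw [hdhead]
    set t2 := d.takeWhile (· == true) with ht2
    set e := d.dropWhile (· == true) with he
    have hsplit2 : t2 ++ e = d := List.takeWhile_append_dropWhile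
    have ht2rep : t2 = List.replicate t2.length true := by
      apply List.eq_replicate_of_mem
      intro b hb
      have := List.mem_takeWhile_imp hb
      simpa using this
    have ht2pos : 0 < t2.length := by
      rw [ht2, hdeq, List.takeWhile_cons_of_pos (by simp)]
      simp
    have hw : w = blk t1.length t2.length ++ e := by
      rw [blk, ← ht1rep, ← ht2rep, List.append_assoc, hsplit2, hsplit]
    rcases eq_or_ne e [] with hee | hene
    · refine ⟨[(t1.length, t2.length)], by simp, ?_, ?_⟩
      · intro p hp
        simp at hp
        subst hp
        exact ⟨ht1pos, ht2pos⟩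
      rw [hw, hee, List.append_nil, bform_cons, bform_nil, List.append_nil]
    · have hlast : e.getLast? = some true := by
        rw [hw, List.getLast?_append] at hl
        rw [List.getLast?_eq_getLast hene] at hl ⊢
        simpa using hl
      have hhead : e.head? = some false := by
        rw [List.head?_eq_head hene]
        have h2 : (e.head hene == true) = false := List.head_dropWhile_not (· == true) hene
        cases hx : e.head hene
        · rfl
        · rw [hx] at h2; simp at h2
      have hlen : e.length ≤ m := by
        have h1 : w.length = t1.length + (t2.length + e.length) := by
          rw [← hsplit, ← hsplit2]; simp
        omega
      obtain ⟨ps', hne', hmem', heq'⟩ := ih e hlen hhead hlast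
      refine ⟨(t1.length, t2.length) :: ps', by simp, ?_, ?_⟩
      · intro p hp
        rcases List.mem_cons.mp hp with rfl | hp
        · exact ⟨ht1pos, ht2pos⟩
        · exact hmem' p hp
      · rw [hw, heq', bform_cons]


lemma exists_bform (w : List Bool) (h0 : false ∈ w) (h1 : true ∈ w) :
    ∃ ps : List (ℕ × ℕ), ps ≠ [] ∧ (∀ p ∈ ps, 1 ≤ p.1 ∧ 1 ≤ p.2) ∧ ConjWords w (bform ps) := by
  obtain ⟨s, t, hst⟩ := List.append_of_mem h1
  have hc1 : ConjWords w ((true :: t) ++ s) := ⟨s, true :: t, hst, rfl⟩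
  set w₂ := (true :: t) ++ s with hw₂
  have h0' : false ∈ w₂ := (conjWords_mem hc1 false).mp h0
  set j := w₂.takeWhile (· == true) with hj
  set d := w₂.dropWhile (· == true) with hdd
  have hsplit : j ++ d = w₂ := List.takeWhile_append_dropWhile
  have hjne : j ≠ [] := by
    rw [hj, hw₂]
    rw [show (true :: t) ++ s = true :: (t ++ s) from rfl,
      List.takeWhile_cons_of_pos (by simp)]
    simp
  have hdne : d ≠ [] := by
    intro h
    rw [h, List.append_nil] at hsplit
    rw [← hsplit] at h0'
    have := List.mem_takeWhile_imp h0'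
    simp at this
  have hc2 : ConjWords w₂ (d ++ j) := ⟨j, d, hsplit.symm, rfl⟩
  have hc3 : ConjWords w (d ++ j) := conjWords_trans hc1 hc2
  have hhead : (d ++ j).head? = some false := by
    rw [List.head?_append_of_ne_nil d hdne, List.head?_eq_head hdne]
    have h2 : (d.head hdne == true) = false := List.head_dropWhile_not (· == true) hdne
    cases hx : d.head hdne
    · rfl
    · rw [hx] at h2; simp at h2
  have hlast : (d ++ j).getLast? = some true := by
    rw [List.getLast?_append, List.getLast?_eq_getLast hjne]
    have hmem := List.getLast_mem hjne
    have hmem2 : j.getLast hjne ∈ w₂.takeWhile (· == true) := hmem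
    have := List.mem_takeWhile_imp hmem2
    simp at this
    rw [this]
    rfl
  obtain ⟨ps, hne, hval, heq⟩ := decomp_aux (d ++ j).length (d ++ j) le_rfl hhead hlast
  exact ⟨ps, hne, hval, heq ▸ hc3⟩

-- removing m singleton zero-blocks
def zap : List (ℕ × ℕ) → ℕ → List (ℕ × ℕ)
  | [], _ => []
  | p :: r, 0 => p :: r
  | p :: r, m+1 => if p.1 = 1 then (0, p.2) :: zap r m else p :: zap r (m+1)

lemma zap_zero : ∀ ps, zap ps 0 = ps := by
  intro ps; cases ps <;> rfl

lemma zap_spec : ∀ (ps : List (ℕ × ℕ)) (m : ℕ), m ≤ ps.countP (fun p => p.1 == 1) →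
    (zap ps m).length = ps.length ∧
    ((zap ps m).map fun p => p.2) = (ps.map fun p => p.2) ∧
    ((zap ps m).map fun p => p.1).sum + m = ((ps.map fun p => p.1).sum) ∧
    (zap ps m).countP (fun p => decide (0 < p.1)) + m = ps.countP (fun p => decide (0 < p.1)) ∧
    List.Forall₂ (fun q p => q.1 ≤ p.1 ∧ q.2 = p.2) (zap ps m) ps := by
  intro ps
  induction ps with
  | nil =>
    intro m hm
    simp [List.countP_nil] at hm
    subst hm
    simp [zap]
  | cons p r ih =>
    intro m hm
    cases m with
    | zero =>
      rw [zap_zero]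
      refine ⟨rfl, rfl, by omega, by omega, ?_⟩
      exact List.forall₂_same.mpr (fun x _ => ⟨le_rfl, rfl⟩)
    | succ m =>
      rw [List.countP_cons] at hm
      by_cases hp : p.1 = 1
      · have hz : zap (p :: r) (m+1) = (0, p.2) :: zap r m := by simp [zap, hp]
        have hm' : m ≤ r.countP (fun p => p.1 == 1) := by
          simp [hp] at hm; omega
        obtain ⟨e1, e2, e3, e4, e5⟩ := ih m hm'
        rw [hz]
        refine ⟨by simp [e1], by simp [e2], by simp; omega, ?_, ?_⟩
        · rw [List.countP_cons, List.countP_cons]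
          simp [hp]
          omega
        · exact List.Forall₂.cons (by simp [hp]) e5
      · have hz : zap (p :: r) (m+1) = p :: zap r (m+1) := by simp [zap, hp]
        have hm' : m + 1 ≤ r.countP (fun p => p.1 == 1) := by
          simp [hp] at hm; omega
        obtain ⟨e1, e2, e3, e4, e5⟩ := ih (m+1) hm'
        rw [hz]
        refine ⟨by simp [e1], by simp [e2], by simp; omega, ?_, ?_⟩
        · rw [List.countP_cons, List.countP_cons]
          omega
        · exact List.Forall₂.cons ⟨le_rfl, rfl⟩ e5

lemma singles_lb : ∀ ps : List (ℕ × ℕ), (∀ p ∈ ps, 1 ≤ p.1) →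
    2 * ps.length ≤ (ps.map fun p => p.1).sum + ps.countP (fun p => p.1 == 1) := by
  intro ps
  induction ps with
  | nil => simp
  | cons p r ih =>
    intro h
    have hp := h p (by simp)
    have hr := ih (fun q hq => h q (by simp [hq]))
    rw [List.countP_cons]
    simp only [List.map_cons, List.sum_cons, List.length_cons]
    by_cases h1 : p.1 = 1 <;> simp [h1] <;> omega

lemma bform_sublist_of_forall₂ : ∀ (qs ps : List (ℕ × ℕ)),
    List.Forall₂ (fun q p => q.1 ≤ p.1 ∧ q.2 = p.2) qs ps → (bform qs).Sublist (bform ps) := by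
  intro qs ps h
  induction h with
  | nil => simp [bform]
  | cons hqp h ih =>
    rename_i q p qs' ps'
    have : bform (q :: qs') = blk q.1 q.2 ++ bform qs' := by simp [bform]
    rw [this]
    have : bform (p :: ps') = blk p.1 p.2 ++ bform ps' := by simp [bform]
    rw [this]
    refine List.Sublist.append ?_ ih
    rw [blk, blk, hqp.2]
    exact List.Sublist.append ((List.replicate_sublist_replicate false).mpr hqp.1) (List.Sublist.refl _)


def gsh : ℕ → List (ℕ × ℕ) → ℕ → List (ℕ × ℕ)
  | o, [], zf => [(o, zf)]
  | o, q :: r, zf => (o, q.1) :: gsh q.2 r zf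

lemma gsh_length : ∀ (r : List (ℕ × ℕ)) (o zf : ℕ), (gsh o r zf).length = r.length + 1 := by
  intro r
  induction r with
  | nil => intro o zf; rfl
  | cons q r ih => intro o zf; simp [gsh, ih]

lemma gsh_mem : ∀ (r : List (ℕ × ℕ)) (o zf : ℕ), 1 ≤ o → 1 ≤ zf →
    (∀ p ∈ r, 1 ≤ p.1 ∧ 1 ≤ p.2) → ∀ p ∈ gsh o r zf, 1 ≤ p.1 ∧ 1 ≤ p.2 := by
  intro r
  induction r with
  | nil =>
    intro o zf ho hzf _ p hp
    simp [gsh] at hp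
    subst hp
    exact ⟨ho, hzf⟩
  | cons q r ih =>
    intro o zf ho hzf hmem p hp
    simp only [gsh, List.mem_cons] at hp
    rcases hp with rfl | hp
    · exact ⟨ho, (hmem q (by simp)).1⟩
    · exact ih q.2 zf (hmem q (by simp)).2 hzf (fun x hx => hmem x (by simp [hx])) p hp

lemma map_not_blk (z o : ℕ) :
    (blk z o).map not = List.replicate z true ++ List.replicate o false := by
  simp [blk]

lemma gsh_key : ∀ (r : List (ℕ × ℕ)) (z o zf : ℕ),
    ((bform ((z, o) :: r)).map not) ++ List.replicate zf true
      = List.replicate z true ++ bform (gsh o r zf) := by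
  intro r
  induction r with
  | nil =>
    intro z o zf
    simp [bform_cons, bform, map_not_blk, gsh, blk]
  | cons q r ih =>
    intro z o zf
    have h1 : bform ((z,o) :: q :: r) = blk z o ++ bform (q :: r) := bform_cons _ _
    rw [h1, List.map_append, map_not_blk, List.append_assoc, List.append_assoc]
    rw [show (gsh o (q :: r) zf) = (o, q.1) :: gsh q.2 r zf from rfl, bform_cons]
    have := ih q.1 q.2 zf
    have h2 : (bform ((q.1, q.2) :: r)).map not = (bform (q :: r)).map not := by
      norm_num
    rw [h2] at this
    rw [show blk q.1 q.2 ++ bform r = bform (q :: r) from (bform_cons q r).symm, this]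
    simp [blk, bform_cons]


lemma lCount_conj {x y : List Bool} (h : ConjWords x y) : lCount x = lCount y := by
  rcases h with ⟨s, t, rfl, rfl⟩
  rw [lCount_eq_cyc, lCount_eq_cyc]
  exact cyc_conj s t

lemma lCount_sublist_le {s w : List Bool} (h : s.Sublist w) : lCount s ≤ lCount w := by
  rw [lCount_eq_cyc, lCount_eq_cyc]
  exact (cyc_sublist w.length w s le_rfl h).1

lemma lCount_sublist_ge {s w : List Bool} (h : s.Sublist w) :
    lCount w ≤ lCount s + (w.length - s.length) := by
  rw [lCount_eq_cyc, lCount_eq_cyc]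
  exact (cyc_sublist w.length w s le_rfl h).2

lemma lCount_bform (ps : List (ℕ × ℕ)) (hne : ps ≠ []) (ho : ∀ p ∈ ps, 1 ≤ p.2) :
    lCount (bform ps) = ps.countP (fun p => decide (0 < p.1)) := by
  rw [lCount_eq_cyc]
  exact cyc_bform ps hne ho

lemma lCount_bform_full (ps : List (ℕ × ℕ)) (hne : ps ≠ [])
    (hval : ∀ p ∈ ps, 1 ≤ p.1 ∧ 1 ≤ p.2) : lCount (bform ps) = ps.length := by
  rw [lCount_bform ps hne (fun p hp => (hval p hp).2)]
  exact List.countP_eq_length.mpr (fun p hp => by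
    simp only [decide_eq_true_eq]
    exact (hval p hp).1)

lemma cyclicSubword_intro {s w w' : List Bool} (hc : ConjWords w w') (hs : s.Sublist w') :
    CyclicSubword s w := ⟨s, w', conjWords_refl s, hc, hs⟩

lemma count_le_of_cyclicSubword {s w : List Bool} (h : CyclicSubword s w) (b : Bool) :
    s.count b ≤ w.count b := by
  obtain ⟨s', w', hcs, hcw, hsub⟩ := h
  rw [conjWords_count hcs b, conjWords_count hcw b]
  exact hsub.count_le b

lemma lCount_le_of_cyclicSubword {s w : List Bool} (h : CyclicSubword s w) :
    lCount s ≤ lCount w := by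
  obtain ⟨s', w', hcs, hcw, hsub⟩ := h
  rw [lCount_conj hcs, lCount_conj hcw]
  exact lCount_sublist_le hsub

lemma lCount_ge_of_cyclicSubword {s w : List Bool} (h : CyclicSubword s w) :
    lCount w ≤ lCount s + (w.length - s.length) := by
  obtain ⟨s', w', hcs, hcw, hsub⟩ := h
  rw [lCount_conj hcs, lCount_conj hcw, conjWords_length hcs, conjWords_length hcw]
  exact lCount_sublist_ge hsub

lemma conjWords_map_not {x y : List Bool} (h : ConjWords x y) :
    ConjWords (x.map not) (y.map not) := by
  rcases h with ⟨s, t, rfl, rfl⟩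
  exact ⟨s.map not, t.map not, by simp, by simp⟩

lemma map_not_map_not (x : List Bool) : (x.map not).map not = x := by
  rw [List.map_map]
  have : (not ∘ not) = id := by funext b; simp
  rw [this, List.map_id]

lemma cyclicSubword_map_not {s w : List Bool} (h : CyclicSubword s w) :
    CyclicSubword (s.map not) (w.map not) := by
  obtain ⟨s', w', hcs, hcw, hsub⟩ := h
  exact ⟨s'.map not, w'.map not, conjWords_map_not hcs, conjWords_map_not hcw, hsub.map not⟩

lemma mem_map_not (b : Bool) (l : List Bool) : b ∈ l.map not ↔ (!b) ∈ l := by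
  rw [List.mem_map]
  constructor
  · rintro ⟨a, ha, rfl⟩
    simpa using ha
  · intro h
    exact ⟨!b, h, by simp⟩

lemma count_map_not (b : Bool) (l : List Bool) : (l.map not).count b = l.count (!b) := by
  have := List.count_map_of_injective l not (fun a b h => by
    cases a <;> cases b <;> simp_all) (!b)
  simpa using this

lemma lCount_map_not (w : List Bool) (h0 : false ∈ w) (h1 : true ∈ w) :
    lCount (w.map not) = lCount w := by
  obtain ⟨ps, hne, hval, hconj⟩ := exists_bform w h0 h1
  obtain ⟨p, r, rfl⟩ : ∃ p r, ps = p :: r := by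
    cases ps with
    | nil => exact absurd rfl hne
    | cons p r => exact ⟨p, r, rfl⟩
  have hz1 : 1 ≤ p.1 := (hval p (by simp)).1
  have ho1 : 1 ≤ p.2 := (hval p (by simp)).2
  have hkey := gsh_key r p.1 p.2 p.1
  have hps : ((p.1, p.2) : ℕ × ℕ) = p := rfl
  have hM : (bform (p :: r)).map not
      = List.replicate p.1 true ++ ((List.replicate p.2 false) ++ (bform r).map not) := by
    rw [bform_cons, List.map_append, map_not_blk]
    simp
  rw [hps] at hkey
  have hD : ((List.replicate p.2 false) ++ (bform r).map not) ++ List.replicate p.1 true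
      = bform (gsh p.2 r p.1) := by
    rw [hM, List.append_assoc] at hkey
    exact List.append_cancel_left hkey
  have hconj2 : ConjWords ((bform (p :: r)).map not) (bform (gsh p.2 r p.1)) :=
    ⟨List.replicate p.1 true, (List.replicate p.2 false) ++ (bform r).map not, hM, hD.symm⟩
  have hc3 : ConjWords (w.map not) (bform (gsh p.2 r p.1)) :=
    conjWords_trans (conjWords_map_not hconj) hconj2
  rw [lCount_conj hc3, lCount_conj hconj]
  have hgval : ∀ q ∈ gsh p.2 r p.1, 1 ≤ q.1 ∧ 1 ≤ q.2 :=
    gsh_mem r p.2 p.1 ho1 hz1 (fun q hq => hval q (by simp [hq]))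
  have hgne : gsh p.2 r p.1 ≠ [] := by
    have := gsh_length r p.2 p.1
    intro h
    rw [h] at this
    simp at this
  rw [lCount_bform_full _ hgne hgval, lCount_bform_full _ hne hval, gsh_length]
  simp

def altw (m : ℕ) : List Bool := bform (List.replicate m (1, 1))

lemma altw_length (m : ℕ) : (altw m).length = 2 * m := by
  rw [altw, bform_length, List.map_replicate, List.sum_replicate]
  simp
  omega

lemma altw_ne_nil {m : ℕ} (hm : 0 < m) : altw m ≠ [] := by
  intro h
  have := altw_length m
  rw [h] at this
  simp at this
  omega

lemma lCount_altw {m : ℕ} (hm : 0 < m) : lCount (altw m) = m := by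
  rw [altw, lCount_bform_full]
  · simp
  · simp; omega
  · intro p hp
    have := List.eq_of_mem_replicate hp
    subst this
    exact ⟨le_rfl, le_rfl⟩

lemma altw_append (a b : ℕ) : altw (a + b) = altw a ++ altw b := by
  rw [altw, altw, altw, List.replicate_add, bform_append]

lemma altw_sublist {a b : ℕ} (h : a ≤ b) : (altw a).Sublist (altw b) := by
  have hb : b = a + (b - a) := by omega
  rw [hb, altw_append]
  exact List.sublist_append_left _ _

lemma altw_sublist_bform : ∀ ps : List (ℕ × ℕ), (∀ p ∈ ps, 1 ≤ p.1 ∧ 1 ≤ p.2) →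
    (altw ps.length).Sublist (bform ps) := by
  intro ps
  induction ps with
  | nil => simp [altw, bform]
  | cons p r ih =>
    intro hval
    have h1 : altw (r.length + 1) = blk 1 1 ++ altw r.length := by
      rw [altw, List.replicate_succ, bform_cons]
      rfl
    rw [List.length_cons, h1, bform_cons]
    refine List.Sublist.append ?_ (ih fun q hq => hval q (by simp [hq]))
    rw [blk, blk]
    exact List.Sublist.append
      ((List.replicate_sublist_replicate false).mpr (hval p (by simp)).1)
      ((List.replicate_sublist_replicate true).mpr (hval p (by simp)).2)

lemma sum_map_fst_add_snd : ∀ ps : List (ℕ × ℕ),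
    (ps.map fun p => p.1 + p.2).sum = (ps.map fun p => p.1).sum + (ps.map fun p => p.2).sum := by
  intro ps
  induction ps with
  | nil => simp
  | cons p r ih => simp [ih]; omega



-- Case A
lemma caseA (b : Bool) (x y : List Bool) (hlt : x.count b < y.count b) :
    CyclicSubword (List.replicate (x.count b + 1) b) y ∧
      ¬ CyclicSubword (List.replicate (x.count b + 1) b) x := by
  constructor
  · refine cyclicSubword_intro (conjWords_refl y) ?_
    have h1 : (List.replicate (x.count b + 1) b).Sublist (List.replicate (y.count b) b) :=
      (List.replicate_sublist_replicate b).mpr (by omega)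
    have h2 : (List.replicate (y.count b) b).Sublist y := by
      rw [← List.filter_beq (l := y) b]
      exact List.filter_sublist (l := y)
    exact h1.trans h2
  · intro hc
    have := count_le_of_cyclicSubword hc b
    rw [List.count_replicate_self] at this
    omega

-- Case I : few blocks
lemma caseI (u v : List Bool) (hv0 : false ∈ v) (hv1 : true ∈ v)
    (hlt : lCount u < lCount v) :
    CyclicSubword (altw (lCount u + 1)) v ∧ ¬ CyclicSubword (altw (lCount u + 1)) u := by
  constructor
  · obtain ⟨ps, hne, hval, hconj⟩ := exists_bform v hv0 hv1
    have hlv : lCount v = ps.length := by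
      rw [lCount_conj hconj, lCount_bform_full ps hne hval]
    refine cyclicSubword_intro hconj ?_
    exact (altw_sublist (by omega)).trans (hlv ▸ altw_sublist_bform ps hval)
  · intro hc
    have h1 := lCount_le_of_cyclicSubword hc
    rw [lCount_altw (by omega)] at h1
    omega

-- Case II
lemma caseII (n : ℕ) (u v : List Bool) (hu : u.length = n) (hv : v.length = n)
    (hu0 : false ∈ u) (hu1 : true ∈ u)
    (hlt : lCount u < lCount v)
    (hreg : 3 * n + 9 ≤ 8 * lCount u)
    (hhalf : 2 * u.count false ≤ n) :
    ∃ w : List Bool, w ≠ [] ∧ 4 * w.length ≤ 3 * n + 16 ∧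
      CyclicSubword w u ∧ ¬ CyclicSubword w v := by
  obtain ⟨ps, hne, hval, hconj⟩ := exists_bform u hu0 hu1
  have hlu : lCount u = ps.length := by
    rw [lCount_conj hconj, lCount_bform_full ps hne hval]
  set l := ps.length with hldef
  set c0 := u.count false with hc0def
  set c1 := u.count true with hc1def
  have hsum : c0 + c1 = n := by rw [hc0def, hc1def, List.count_false_add_count_true, hu]
  have hc0ps : (ps.map fun p => p.1).sum = c0 := by
    rw [← bform_count_false ps, hc0def, conjWords_count hconj false]
  have hc1ps : (ps.map fun p => p.2).sum = c1 := by
    rw [← bform_count_true ps, hc1def, conjWords_count hconj true]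
  have hlpos : 1 ≤ l := by
    rw [hldef]
    cases ps with
    | nil => exact absurd rfl hne
    | cons p r => simp
  have hlc0 : l ≤ c0 := by
    rw [← hc0ps]
    have := List.length_le_sum_of_one_le (ps.map fun p => p.1) (by
      intro x hx
      rw [List.mem_map] at hx
      obtain ⟨q, hq, rfl⟩ := hx
      exact (hval q hq).1)
    simpa using this
  have hc1pos : 1 ≤ c1 := by
    rw [hc1def]
    exact List.count_pos_iff.mpr hu1
  have hsingles := singles_lb ps (fun p hp => (hval p hp).1)
  rw [hc0ps] at hsingles
  set s := ps.countP (fun p => p.1 == 1) with hsdef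
  -- choose k
  set k := if c0 ≤ l + 1 then 1 else c0 - l with hkdef
  have hk1 : 1 ≤ k := by
    rw [hkdef]; split <;> omega
  have hkc0 : c0 ≤ l + k := by
    rw [hkdef]; split <;> omega
  have hkl : k ≤ l := by
    rw [hkdef]; split <;> omega
  set m := l - k with hmdef
  have hms : m ≤ s := by omega
  obtain ⟨e1, e2, e3, e4, e5⟩ := zap_spec ps m (by omega)
  set qs := zap ps m with hqsdef
  have hqsne : qs ≠ [] := by
    intro h
    rw [h] at e1
    simp at e1
    omega
  have hqso : ∀ q ∈ qs, 1 ≤ q.2 := by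
    intro q hq
    have : q.2 ∈ qs.map (fun p => p.2) := List.mem_map.mpr ⟨q, hq, rfl⟩
    rw [e2, List.mem_map] at this
    obtain ⟨p, hp, hpq⟩ := this
    rw [← hpq]
    exact (hval p hp).2
  have hcountP : ps.countP (fun p => decide (0 < p.1)) = l :=
    List.countP_eq_length.mpr (fun p hp => by
      simp only [decide_eq_true_eq]
      exact (hval p hp).1)
  have hBl : lCount (bform qs) = k := by
    rw [lCount_bform qs hqsne hqso]
    omega
  have hBlen : (bform qs).length = n - m := by
    rw [bform_length, sum_map_fst_add_snd]
    have h2 : (qs.map fun p => p.2).sum = c1 := by rw [e2, hc1ps]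
    omega
  have hsubB : (bform qs).Sublist (bform ps) := bform_sublist_of_forall₂ qs ps e5
  refine ⟨bform qs, ?_, ?_, cyclicSubword_intro hconj hsubB, ?_⟩
  · intro h
    have := hBlen
    rw [h] at this
    simp at this
    omega
  · rw [hBlen]
    rw [hkdef] at hmdef
    split at hmdef <;> omega
  · intro hc
    have h1 := lCount_ge_of_cyclicSubword hc
    rw [hBl, hBlen, hv] at h1
    omega

-- Case B : equal counts, different block numbers
lemma caseB (n : ℕ) (u v : List Bool) (hu : u.length = n) (hv : v.length = n)
    (hu0 : false ∈ u) (hu1 : true ∈ u) (hv0 : false ∈ v) (hv1 : true ∈ v)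
    (hc0 : u.count false = v.count false)
    (hlt : lCount u < lCount v) :
    ∃ w : List Bool, w ≠ [] ∧ 4 * w.length ≤ 3 * n + 16 ∧ Distinguishing w u v := by
  by_cases hreg : 8 * lCount u ≤ 3 * n + 8
  · obtain ⟨h1, h2⟩ := caseI u v hv0 hv1 hlt
    refine ⟨altw (lCount u + 1), altw_ne_nil (by omega), ?_, Or.inr ⟨h1, h2⟩⟩
    rw [altw_length]
    omega
  · by_cases hhalf : 2 * u.count false ≤ n
    · obtain ⟨w, hne, hlen, h1, h2⟩ := caseII n u v hu hv hu0 hu1 hlt (by omega) hhalf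
      exact ⟨w, hne, hlen, Or.inl ⟨h1, h2⟩⟩
    · -- swap letters
      have hsumu : u.count false + u.count true = n := by
        rw [List.count_false_add_count_true, hu]
      have hsumv : v.count false + v.count true = n := by
        rw [List.count_false_add_count_true, hv]
      have hlu' : lCount (u.map not) = lCount u := lCount_map_not u hu0 hu1
      have hlv' : lCount (v.map not) = lCount v := lCount_map_not v hv0 hv1
      have hcu' : (u.map not).count false = u.count true := by
        rw [count_map_not]
        rfl
      have hhalf' : 2 * (u.map not).count false ≤ n := by
        rw [hcu']
        omega
      obtain ⟨w, hne, hlen, h1, h2⟩ := caseII n (u.map not) (v.map not)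
        (by rw [List.length_map, hu]) (by rw [List.length_map, hv])
        ((mem_map_not false u).mpr (by simpa using hu1))
        ((mem_map_not true u).mpr (by simpa using hu0))
        (by rw [hlu', hlv']; exact hlt)
        (by rw [hlu']; omega)
        hhalf'
      refine ⟨w.map not, by simp [hne], by rw [List.length_map]; exact hlen, ?_⟩
      refine Or.inl ⟨?_, ?_⟩
      · have := cyclicSubword_map_not h1
        rwa [map_not_map_not] at this
      · intro hc
        have := cyclicSubword_map_not hc
        rw [map_not_map_not] at this
        exact h2 this

theorem statement7 (n : ℕ) (u v : List Bool)
    (hu : u.length = n) (hv : v.length = n)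
    (hu0 : false ∈ u) (hu1 : true ∈ u) (hv0 : false ∈ v) (hv1 : true ∈ v)
    (h : u.count false ≠ v.count false ∨ u.count true ≠ v.count true ∨ lCount u ≠ lCount v) :
    ∃ w : List Bool, w ≠ [] ∧ 4 * w.length ≤ 3 * n + 16 ∧ Distinguishing w u v := by
  have hsumu : u.count false + u.count true = n := by
    rw [List.count_false_add_count_true, hu]
  have hsumv : v.count false + v.count true = n := by
    rw [List.count_false_add_count_true, hv]
  by_cases hc : u.count false = v.count false
  · -- equal counts : block numbers differ
    have hct : u.count true = v.count true := by omega
    have hl : lCount u ≠ lCount v := by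
      rcases h with h | h | h
      · exact absurd hc h
      · exact absurd hct h
      · exact h
    rcases Nat.lt_or_ge (lCount u) (lCount v) with hlt | hge
    · exact caseB n u v hu hv hu0 hu1 hv0 hv1 hc hlt
    · have hlt : lCount v < lCount u := by omega
      obtain ⟨w, hne, hlen, hd⟩ := caseB n v u hv hu hv0 hv1 hu0 hu1 hc.symm hlt
      refine ⟨w, hne, hlen, ?_⟩
      rcases hd with ⟨h1, h2⟩ | ⟨h1, h2⟩
      · exact Or.inr ⟨h1, h2⟩
      · exact Or.inl ⟨h1, h2⟩
  · -- counts differ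
    have hct : u.count true ≠ v.count true := by omega
    have hmin : min (u.count false) (v.count false) + min (u.count true) (v.count true) ≤ n := by
      omega
    by_cases hm : min (u.count false) (v.count false) ≤ min (u.count true) (v.count true)
    · -- use letter false
      rcases Nat.lt_or_ge (u.count false) (v.count false) with hlt | hge
      · obtain ⟨h1, h2⟩ := caseA false u v hlt
        refine ⟨List.replicate (u.count false + 1) false, by simp, ?_, Or.inr ⟨h1, h2⟩⟩
        rw [List.length_replicate]
        omega
      · have hlt : v.count false < u.count false := by omega
        obtain ⟨h1, h2⟩ := caseA false v u hlt
        refine ⟨List.replicate (v.count false + 1) false, by simp, ?_, Or.inl ⟨h1, h2⟩⟩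
        rw [List.length_replicate]
        omega
    · -- use letter true
      rcases Nat.lt_or_ge (u.count true) (v.count true) with hlt | hge
      · obtain ⟨h1, h2⟩ := caseA true u v hlt
        refine ⟨List.replicate (u.count true + 1) true, by simp, ?_, Or.inr ⟨h1, h2⟩⟩
        rw [List.length_replicate]
        omega
      · have hlt : v.count true < u.count true := by omega
        obtain ⟨h1, h2⟩ := caseA true v u hlt
        refine ⟨List.replicate (v.count true + 1) true, by simp, ?_, Or.inl ⟨h1, h2⟩⟩
        rw [List.length_replicate]
        omega
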